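/- arXiv:2503.16933 — 2 statements merged into one kernel-verified Lean document; each statement's English description precedes it below -/
import Mathlib

section
/- Let (T₁, T₂) be a pair of doubly commuting 2-isometries on a complex Hilbert space H and let E₁ := ker T₁*. Then for every integer m ≥ 0, T₁^m(⋂_{n≥0} T₂ⁿ(E₁)) = T₁^m(E₁) ∩ (⋂_{n≥0} T₂ⁿ(H)), and symmetrically with the roles of T₁ and T₂ (and E₂ := ker T₂*) interchanged. -/
open ContinuousLinearMap

/-!
A 2-isometry is expansive: `n ↦ ‖Tⁿh‖²` has vanishing second differences, so it is an
arithmetic progression of nonnegative reals and its step `‖Th‖² - ‖h‖²` is nonnegative.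
Hence `T₁^m` is injective with closed range, and `H = ran T₁^m ⊕ ker T₁^m*`. The injective
operator `T₂ⁿ` commutes with `T₁^m` and `T₁^m*`, so it preserves `ker T₁^m*` and cannot send a
nonzero vector of it into `ran T₁^m`; this lets one cancel `T₂ⁿ` in `T₁^m z = T₂ⁿ h` to get
`z = T₂ⁿ g`, and `g ∈ E₁` because `T₂ⁿ` also commutes with `T₁*`.
-/

def IsTwoIsometry {E : Type*} [SeminormedAddGroup E] (f : E → E) : Prop :=
  ∀ x, ‖f (f x)‖ ^ 2 - 2 * ‖f x‖ ^ 2 + ‖x‖ ^ 2 = 0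

theorem IsTwoIsometry.norm_le_norm_apply {E : Type*} [SeminormedAddGroup E] {f : E → E}
    (hf : IsTwoIsometry f) (x : E) : ‖x‖ ≤ ‖f x‖ := by
  set a : ℕ → ℝ := fun n ↦ ‖f^[n] x‖ ^ 2 with ha_def
  have hstep : ∀ n, a (n + 1) - a n = a 1 - a 0 := by
    intro n
    induction n with
    | zero => rfl
    | succ n ih =>
      have := hf (f^[n] x)
      simp only [ha_def, Function.iterate_succ_apply'] at this ih ⊢
      linarith
  have hprog : ∀ n : ℕ, a n = a 0 + n * (a 1 - a 0) := by
    intro n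
    induction n with
    | zero => simp
    | succ n ih => push_cast; linarith [hstep n]
  by_contra! hlt
  have hdrop : 0 < a 0 - a 1 := by
    simp only [ha_def, Function.iterate_zero_apply, Function.iterate_one]
    nlinarith [norm_nonneg (f x)]
  obtain ⟨n, hn⟩ := exists_nat_gt (a 0 / (a 0 - a 1))
  rw [div_lt_iff₀ hdrop] at hn
  have : 0 ≤ a n := sq_nonneg _
  linarith [hprog n]

theorem norm_le_norm_pow_apply {R E : Type*} [Semiring R] [SeminormedAddCommGroup E]
    [Module R E] {T : E →L[R] E} (hT : ∀ x, ‖x‖ ≤ ‖T x‖) (n : ℕ) (x : E) :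
    ‖x‖ ≤ ‖(T ^ n) x‖ := by
  induction n with
  | zero => simp
  | succ n ih => rw [pow_succ', mul_apply_eq_comp]; exact ih.trans (hT _)

theorem Commute.apply_mem_ker {R M : Type*} [Semiring R] [TopologicalSpace M] [AddCommMonoid M]
    [Module R M] {S T : M →L[R] M} (h : Commute S T) {x : M}
    (hx : x ∈ LinearMap.ker (S : M →ₗ[R] M)) : T x ∈ LinearMap.ker (S : M →ₗ[R] M) := by
  change (S * T) x = 0
  rw [h.eq, mul_apply_eq_comp, show S x = 0 from hx, map_zero]

section

variable {𝕜 E : Type*} [RCLike 𝕜] [NormedAddCommGroup E] [InnerProductSpace 𝕜 E] [CompleteSpace E]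
  {A B : E →L[𝕜] E}

theorem ContinuousLinearMap.mem_range_of_apply_mem_range (hA : Function.Injective A)
    (hA_closed : IsClosed (LinearMap.range (A : E →ₗ[𝕜] E) : Set E)) (hB : Function.Injective B)
    (hAB : Commute A B) (hA'B : Commute (adjoint A) B) {z : E}
    (hz : A z ∈ LinearMap.range (B : E →ₗ[𝕜] E)) : z ∈ LinearMap.range (B : E →ₗ[𝕜] E) := by
  have : CompleteSpace (LinearMap.range (A : E →ₗ[𝕜] E)) := hA_closed.completeSpace_coe
  obtain ⟨h, hh⟩ := hz
  obtain ⟨_, ⟨g, rfl⟩, w, hw, rfl⟩ :=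
    (LinearMap.range (A : E →ₗ[𝕜] E)).exists_add_mem_mem_orthogonal h
  simp only [coe_coe, map_add] at hh
  have hBw_range : B w ∈ LinearMap.range (A : E →ₗ[𝕜] E) := by
    refine ⟨z - B g, ?_⟩
    rw [coe_coe, map_sub, ← hh, ← mul_apply_eq_comp, ← hAB.eq,
      mul_apply_eq_comp, add_sub_cancel_left]
  have hBw_perp : B w ∈ (LinearMap.range (A : E →ₗ[𝕜] E))ᗮ := by
    rw [orthogonal_range] at hw ⊢
    change (adjoint A * B) w = 0
    rw [hA'B.eq, mul_apply_eq_comp, show adjoint A w = 0 from hw, map_zero]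
  have hw0 : w = 0 := hB <| by
    rw [map_zero]
    exact Submodule.disjoint_def.1 (Submodule.orthogonal_disjoint _) _ hBw_range hBw_perp
  refine ⟨g, hA ?_⟩
  rw [coe_coe, ← mul_apply_eq_comp, hAB.eq, mul_apply_eq_comp, ← hh,
    hw0, map_zero, add_zero]

theorem ContinuousLinearMap.map_map_ker_eq_map_ker_inf_range {C : E →L[𝕜] E}
    (hA : Function.Injective A) (hA_closed : IsClosed (LinearMap.range (A : E →ₗ[𝕜] E) : Set E))
    (hB : Function.Injective B) (hAB : Commute A B) (hA'B : Commute (adjoint A) B)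
    (hCB : Commute C B) :
    Submodule.map (A : E →ₗ[𝕜] E) (Submodule.map (B : E →ₗ[𝕜] E) (LinearMap.ker (C : E →ₗ[𝕜] E))) =
      Submodule.map (A : E →ₗ[𝕜] E) (LinearMap.ker (C : E →ₗ[𝕜] E)) ⊓
        LinearMap.range (B : E →ₗ[𝕜] E) := by
  apply le_antisymm
  · rintro _ ⟨_, ⟨e, he, rfl⟩, rfl⟩
    refine ⟨⟨B e, hCB.apply_mem_ker he, rfl⟩, A e, ?_⟩
    simp only [coe_coe, ← mul_apply_eq_comp, hAB.eq]
  · rintro _ ⟨⟨e, he, rfl⟩, hAe⟩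
    obtain ⟨g, rfl⟩ := mem_range_of_apply_mem_range hA hA_closed hB hAB hA'B hAe
    refine ⟨B g, ⟨g, hB ?_, rfl⟩, rfl⟩
    change B (C g) = B 0
    rw [map_zero, ← mul_apply_eq_comp, ← hCB.eq, mul_apply_eq_comp]
    exact he

theorem ContinuousLinearMap.map_pow_iInf_map_pow_ker_adjoint {S T : E →L[𝕜] E}
    (hS : ∀ x, ‖x‖ ≤ ‖S x‖) (hT : Function.Injective T) (hST : Commute S T)
    (hS'T : Commute (adjoint S) T) (m : ℕ) :
    Submodule.map ((S ^ m : E →L[𝕜] E) : E →ₗ[𝕜] E)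
        (⨅ n : ℕ, Submodule.map ((T ^ n : E →L[𝕜] E) : E →ₗ[𝕜] E)
          (LinearMap.ker (adjoint S : E →ₗ[𝕜] E))) =
      Submodule.map ((S ^ m : E →L[𝕜] E) : E →ₗ[𝕜] E) (LinearMap.ker (adjoint S : E →ₗ[𝕜] E)) ⊓
        ⨅ n : ℕ, LinearMap.range ((T ^ n : E →L[𝕜] E) : E →ₗ[𝕜] E) := by
  have hSm : AntilipschitzWith 1 (S ^ m) :=
    (S ^ m).antilipschitz_of_bound fun x ↦ by simpa using norm_le_norm_pow_apply hS m x
  have hSm_closed : IsClosed (LinearMap.range ((S ^ m : E →L[𝕜] E) : E →ₗ[𝕜] E) : Set E) := by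
    rw [LinearMap.coe_range, coe_coe]
    exact hSm.isClosed_range (S ^ m).uniformContinuous
  have hSm_adj : Commute (adjoint (S ^ m)) T := by
    rw [← star_eq_adjoint, star_pow, star_eq_adjoint]
    exact hS'T.pow_left m
  rw [Submodule.map_iInf _ hSm.injective, inf_iInf]
  refine iInf_congr fun n ↦ map_map_ker_eq_map_ker_inf_range hSm.injective hSm_closed ?_
    (hST.pow_pow m n) (hSm_adj.pow_right n) (hS'T.pow_right n)
  simpa using hT.iterate n

end

/-- For a doubly commuting pair of 2-isometries `(T₁, T₂)`,
with `E₁ = ker T₁*` and `E₂ = ker T₂*`, one has for every `m ≥ 0`: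
`T₁^m(⋂ₙ T₂ⁿ(E₁)) = T₁^m(E₁) ∩ ⋂ₙ T₂ⁿ(H)`, and symmetrically. -/
theorem doublyCommuting_twoIsometries_image_of_intersection
    {H : Type*} [NormedAddCommGroup H] [InnerProductSpace ℂ H] [CompleteSpace H]
    (T₁ T₂ : H →L[ℂ] H)
    (h2iso₁ : ∀ h : H, ‖T₁ (T₁ h)‖ ^ 2 - 2 * ‖T₁ h‖ ^ 2 + ‖h‖ ^ 2 = 0)
    (h2iso₂ : ∀ h : H, ‖T₂ (T₂ h)‖ ^ 2 - 2 * ‖T₂ h‖ ^ 2 + ‖h‖ ^ 2 = 0)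
    (hcomm : T₁ ∘L T₂ = T₂ ∘L T₁)
    (hdcomm : T₁ ∘L adjoint T₂ = adjoint T₂ ∘L T₁) :
    (∀ m : ℕ,
      Submodule.map ((T₁ ^ m : H →L[ℂ] H) : H →ₗ[ℂ] H)
          (⨅ n : ℕ, Submodule.map ((T₂ ^ n : H →L[ℂ] H) : H →ₗ[ℂ] H) (LinearMap.ker ((adjoint T₁ : H →L[ℂ] H) : H →ₗ[ℂ] H)))
        = Submodule.map ((T₁ ^ m : H →L[ℂ] H) : H →ₗ[ℂ] H) (LinearMap.ker ((adjoint T₁ : H →L[ℂ] H) : H →ₗ[ℂ] H))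
            ⊓ (⨅ n : ℕ, LinearMap.range ((T₂ ^ n : H →L[ℂ] H) : H →ₗ[ℂ] H))) ∧
    (∀ m : ℕ,
      Submodule.map ((T₂ ^ m : H →L[ℂ] H) : H →ₗ[ℂ] H)
          (⨅ n : ℕ, Submodule.map ((T₁ ^ n : H →L[ℂ] H) : H →ₗ[ℂ] H) (LinearMap.ker ((adjoint T₂ : H →L[ℂ] H) : H →ₗ[ℂ] H)))
        = Submodule.map ((T₂ ^ m : H →L[ℂ] H) : H →ₗ[ℂ] H) (LinearMap.ker ((adjoint T₂ : H →L[ℂ] H) : H →ₗ[ℂ] H))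
            ⊓ (⨅ n : ℕ, LinearMap.range ((T₁ ^ n : H →L[ℂ] H) : H →ₗ[ℂ] H))) := by
  have hexp₁ : ∀ x, ‖x‖ ≤ ‖T₁ x‖ := IsTwoIsometry.norm_le_norm_apply h2iso₁
  have hexp₂ : ∀ x, ‖x‖ ≤ ‖T₂ x‖ := IsTwoIsometry.norm_le_norm_apply h2iso₂
  have hinj : ∀ T : H →L[ℂ] H, (∀ x, ‖x‖ ≤ ‖T x‖) → Function.Injective T := fun T hT ↦
    (T.antilipschitz_of_bound (K := 1) fun x ↦ by simpa using hT x).injective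
  have hcomm' : Commute T₁ T₂ := hcomm
  have hadj₂ : Commute (adjoint T₂) T₁ := hdcomm.symm
  have hadj₁ : Commute (adjoint T₁) T₂ := by
    simpa only [← star_eq_adjoint, star_star] using hadj₂.symm.star_star
  exact ⟨map_pow_iInf_map_pow_ker_adjoint hexp₁ (hinj T₂ hexp₂) hcomm' hadj₁,
    map_pow_iInf_map_pow_ker_adjoint hexp₂ (hinj T₁ hexp₁) hcomm'.symm hadj₂⟩
end

section
/- Wold-type decomposition for doubly commuting 2-isometries: let (T₁, T₂) be a pair of doubly commuting 2-isometries on a complex Hilbert space H. Define H₀₀ := ⋂_{m,n≥0} T₁^m T₂ⁿ(H); H₁₀ := (closed span of ⋃_{m≥0} T₁^m(ker T₁*)) ∩ (⋂_{n≥0} T₂ⁿ(H)); H₀₁ := (closed span of ⋃_{n≥0} T₂ⁿ(ker T₂*)) ∩ (⋂_{m≥0} T₁^m(H)); and H₁₁ := closed span of ⋃_{m,n≥0} T₁^m T₂ⁿ(ker T₁* ∩ ker T₂*). Then these four closed subspaces are mutually orthogonal, H = H₀₀ ⊕ H₁₀ ⊕ H₀₁ ⊕ H₁₁, each of them reduces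 both T₁ and T₂, T₁ and T₂ restrict to unitaries on H₀₀, T₂ restricts to a unitary on H₁₀ while T₁ restricts to an analytic 2-isometry on H₁₀, T₁ restricts to a unitary on H₀₁ while T₂ restricts to an analytic 2-isometry on H₀₁, and both T₁ and T₂ restrict to analytic 2-isometries on H₁₁. -/
/-!
If `T` is a 2-isometry then `n ↦ ‖Tⁿ x‖²` is affine, so `T` is bounded below, every `Tⁿ(H)` is
closed, and on `U(T) = ⋂ₙ Tⁿ(H)` the defect `‖T x‖² - ‖x‖²` vanishes: `T` is unitary there.
Shimorin's argument identifies `U(T)ᗮ` with the closed invariant subspace `W(T)` generated by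
`ker T*`. For `x ⊥ W(T)` split `v₀ = x` repeatedly as `vₖ = T vₖ₊₁ + eₖ` with `eₖ ∈ ker T*`;
then `x = ∑_{k<n} Tᵏ eₖ + Tⁿ vₙ` gives `⟪x, Tⁿ vₙ⟫ = ‖x‖²`, while Pythagoras makes the defects
of the `vₖ` summable. Along a subsequence `n · defect(vₙ)` is small, so
`‖x - Tⁿ vₙ‖² = ‖vₙ‖² + n · defect(vₙ) - ‖x‖²` is small and `x` lies in every `Tᵐ(H)`.

For a doubly commuting pair, `U(T₁)`, `U(T₂)` and their complements `W(T₁)`, `W(T₂)` reduce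
both operators, so the two orthogonal projections commute and `H` splits into the four
intersections. The remaining identification of `W(T₁) ⊓ W(T₂)` with the closed span of
`T₁ᵐ T₂ⁿ (ker T₁* ⊓ ker T₂*)` comes from compressing the generators of `W(T₂)` by the projection
onto `W(T₁)`, and those of `W(T₁)` by the projection onto `ker T₂*`.
-/

open ContinuousLinearMap
open scoped ComplexInnerProductSpace InnerProductSpace

namespace ContinuousLinearMap

section NormedSpace

variable {𝕜 E : Type*} [NontriviallyNormedField 𝕜] [NormedAddCommGroup E] [NormedSpace 𝕜 E]

def IsTwoIsometry (T : E →L[𝕜] E) : Prop :=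
  ∀ x, ‖T (T x)‖ ^ 2 - 2 * ‖T x‖ ^ 2 + ‖x‖ ^ 2 = 0

def unitaryPart (T : E →L[𝕜] E) : Submodule 𝕜 E :=
  ⨅ n : ℕ, LinearMap.range ((T ^ n : E →L[𝕜] E) : E →ₗ[𝕜] E)

def orbitClosure (T : E →L[𝕜] E) (N : Submodule 𝕜 E) : Submodule 𝕜 E :=
  (⨆ k : ℕ, N.map ((T ^ k : E →L[𝕜] E) : E →ₗ[𝕜] E)).topologicalClosure

theorem pow_succ_apply' (T : E →L[𝕜] E) (n : ℕ) (x : E) : (T ^ (n + 1)) x = T ((T ^ n) x) := by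
  rw [pow_succ', mul_apply_eq_comp]

theorem pow_apply_mem {T : E →L[𝕜] E} {K : Submodule 𝕜 E} (hTK : ∀ x ∈ K, T x ∈ K) (n : ℕ)
    {x : E} (hx : x ∈ K) : (T ^ n) x ∈ K := by
  induction n with
  | zero => simpa using hx
  | succ n ih => simpa only [pow_succ_apply'] using hTK _ ih

theorem sum_pow_apply_sub_add (T : E →L[𝕜] E) (v : ℕ → E) (n : ℕ) :
    ∑ k ∈ Finset.range n, (T ^ k) (v k - T (v (k + 1))) + (T ^ n) (v n) = v 0 := by
  have hstep : ∀ k,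
      (T ^ k) (v k - T (v (k + 1))) = (T ^ k) (v k) - (T ^ (k + 1)) (v (k + 1)) := fun k => by
    rw [map_sub, pow_succ, mul_apply_eq_comp]
  simp only [hstep, Finset.sum_range_sub' (fun k => (T ^ k) (v k)), pow_zero, one_apply_eq_self,
    sub_add_cancel]

theorem mem_unitaryPart_of_commute {T B : E →L[𝕜] E} (hB : Commute B T) {x : E}
    (hx : x ∈ T.unitaryPart) : B x ∈ T.unitaryPart := by
  refine Submodule.mem_iInf _ |>.2 fun n => ?_
  obtain ⟨y, rfl⟩ := Submodule.mem_iInf _ |>.1 hx n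
  exact ⟨B y, by simp only [coe_coe, ← mul_apply_eq_comp, (hB.pow_right n).eq]⟩

theorem pow_apply_mem_orbitClosure (T : E →L[𝕜] E) {N : Submodule 𝕜 E} (k : ℕ) {x : E}
    (hx : x ∈ N) : (T ^ k) x ∈ T.orbitClosure N :=
  Submodule.le_topologicalClosure _ <| Submodule.mem_iSup_of_mem k <| Submodule.mem_map_of_mem hx

theorem orbitClosure_le {T : E →L[𝕜] E} {N K : Submodule 𝕜 E} (hK : IsClosed (K : Set E))
    (hTK : ∀ x ∈ K, T x ∈ K) (hNK : N ≤ K) : T.orbitClosure N ≤ K := by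
  refine Submodule.topologicalClosure_minimal _ (iSup_le fun k => ?_) hK
  rintro _ ⟨x, hx, rfl⟩
  exact pow_apply_mem hTK k (hNK hx)

theorem orbitClosure_mono (T : E →L[𝕜] E) {N N' : Submodule 𝕜 E} (h : N ≤ N') :
    T.orbitClosure N ≤ T.orbitClosure N' :=
  Submodule.topologicalClosure_mono <| iSup_mono fun _ => Submodule.map_mono h

theorem map_orbitClosure_le {T B : E →L[𝕜] E} (hB : Commute B T) (N : Submodule 𝕜 E) :
    (T.orbitClosure N).map (B : E →ₗ[𝕜] E) ≤ T.orbitClosure (N.map (B : E →ₗ[𝕜] E)) := by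
  rintro _ ⟨x, hx, rfl⟩
  refine map_mem_closure B.continuous hx fun y hy => ?_
  refine Submodule.iSup_induction _ (motive := fun y => B y ∈ _) hy (fun k z hz => ?_)
    (by simp) (fun _ _ h₁ h₂ => by simpa using Submodule.add_mem _ h₁ h₂)
  obtain ⟨w, hw, rfl⟩ := hz
  have hswap : B ((T ^ k) w) = (T ^ k) (B w) := by
    simp only [← mul_apply_eq_comp, (hB.pow_right k).eq]
  simp only [coe_coe, hswap]
  exact Submodule.mem_iSup_of_mem k (Submodule.mem_map_of_mem (Submodule.mem_map_of_mem hw))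

theorem orbitClosure_orbitClosure {T₁ T₂ : E →L[𝕜] E} (h : Commute T₁ T₂) (N : Submodule 𝕜 E) :
    T₂.orbitClosure (T₁.orbitClosure N) = (⨆ p : ℕ × ℕ,
      N.map (((T₁ ^ p.1) ∘L (T₂ ^ p.2) : E →L[𝕜] E) : E →ₗ[𝕜] E)).topologicalClosure := by
  refine le_antisymm (Submodule.topologicalClosure_minimal _ (iSup_le fun n => ?_)
    (Submodule.isClosed_topologicalClosure _)) (Submodule.topologicalClosure_minimal _
    (iSup_le fun p => ?_) (Submodule.isClosed_topologicalClosure _))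
  · refine (map_orbitClosure_le (h.pow_right n).symm N).trans
      (Submodule.topologicalClosure_mono (iSup_le fun m => ?_))
    rw [← Submodule.map_comp]
    exact le_iSup_of_le (m, n) le_rfl
  · rintro _ ⟨x, hx, rfl⟩
    have hswap : (T₁ ^ p.1) ((T₂ ^ p.2) x) = (T₂ ^ p.2) ((T₁ ^ p.1) x) := by
      rw [← mul_apply_eq_comp, (h.pow_pow p.1 p.2).eq, mul_apply_eq_comp]
    simpa only [coe_coe, comp_apply, hswap] using
      T₂.pow_apply_mem_orbitClosure p.2 (T₁.pow_apply_mem_orbitClosure p.1 hx)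

namespace IsTwoIsometry

variable {T : E →L[𝕜] E} (hT : T.IsTwoIsometry)
include hT

theorem norm_sq_pow_succ_apply_sub (n : ℕ) (x : E) :
    ‖(T ^ (n + 1)) x‖ ^ 2 - ‖(T ^ n) x‖ ^ 2 = ‖T x‖ ^ 2 - ‖x‖ ^ 2 := by
  induction n with
  | zero => simp
  | succ n ih =>
    have := hT ((T ^ n) x)
    simp only [pow_succ_apply'] at ih ⊢
    linarith

theorem norm_sq_pow_apply (n : ℕ) (x : E) :
    ‖(T ^ n) x‖ ^ 2 = ‖x‖ ^ 2 + n * (‖T x‖ ^ 2 - ‖x‖ ^ 2) := by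
  induction n with
  | zero => simp
  | succ n ih => rw [Nat.cast_succ]; linarith [hT.norm_sq_pow_succ_apply_sub n x]

theorem norm_le_norm_apply (x : E) : ‖x‖ ≤ ‖T x‖ := by
  by_contra! h
  have hd : 0 < ‖x‖ ^ 2 - ‖T x‖ ^ 2 := by nlinarith [norm_nonneg (T x)]
  obtain ⟨n, hn⟩ := exists_nat_gt (‖x‖ ^ 2 / (‖x‖ ^ 2 - ‖T x‖ ^ 2))
  rw [div_lt_iff₀ hd] at hn
  nlinarith [hT.norm_sq_pow_apply n x, sq_nonneg ‖(T ^ n) x‖]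

theorem norm_sq_sub_norm_sq_nonneg (x : E) : 0 ≤ ‖T x‖ ^ 2 - ‖x‖ ^ 2 :=
  sub_nonneg.2 (pow_le_pow_left₀ (norm_nonneg x) (hT.norm_le_norm_apply x) 2)

theorem norm_le_norm_pow_apply (n : ℕ) (x : E) : ‖x‖ ≤ ‖(T ^ n) x‖ := by
  refine le_of_pow_le_pow_left₀ two_ne_zero (norm_nonneg _) ?_
  rw [hT.norm_sq_pow_apply]
  nlinarith [mul_nonneg n.cast_nonneg (hT.norm_sq_sub_norm_sq_nonneg x)]

theorem antilipschitz_pow (n : ℕ) : AntilipschitzWith 1 (T ^ n) :=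
  (T ^ n).antilipschitz_of_bound fun x => by simpa using hT.norm_le_norm_pow_apply n x

theorem isClosed_range_pow [CompleteSpace E] (n : ℕ) :
    IsClosed (LinearMap.range ((T ^ n : E →L[𝕜] E) : E →ₗ[𝕜] E) : Set E) :=
  (hT.antilipschitz_pow n).isClosed_range (T ^ n).uniformContinuous

theorem isClosed_unitaryPart [CompleteSpace E] : IsClosed (T.unitaryPart : Set E) := by
  rw [unitaryPart, Submodule.coe_iInf]
  exact isClosed_iInter hT.isClosed_range_pow

theorem injective : Function.Injective T := by
  simpa using (hT.antilipschitz_pow 1).injective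

theorem exists_mem_unitaryPart_apply_eq {x : E} (hx : x ∈ T.unitaryPart) :
    ∃ y ∈ T.unitaryPart, T y = x := by
  obtain ⟨y, hy⟩ := Submodule.mem_iInf _ |>.1 hx 1
  refine ⟨y, Submodule.mem_iInf _ |>.2 fun n => ?_, by simpa using hy⟩
  obtain ⟨w, hw⟩ := Submodule.mem_iInf _ |>.1 hx (n + 1)
  refine ⟨w, hT.injective ?_⟩
  simp only [coe_coe, pow_one] at hw hy ⊢
  rw [← pow_succ_apply', hw, hy]

theorem norm_apply_eq_of_mem_unitaryPart {x : E} (hx : x ∈ T.unitaryPart) : ‖T x‖ = ‖x‖ := by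
  -- the defect `‖T z‖² - ‖z‖²` is constant along orbits, and `x = Tⁿ y` for every `n`
  have hbound : ∀ n : ℕ, n * (‖T x‖ ^ 2 - ‖x‖ ^ 2) ≤ ‖x‖ ^ 2 := by
    intro n
    obtain ⟨y, rfl⟩ := Submodule.mem_iInf _ |>.1 hx n
    have hshift := hT.norm_sq_pow_succ_apply_sub n y
    rw [pow_succ_apply'] at hshift
    simp only [coe_coe] at hshift ⊢
    rw [hshift, hT.norm_sq_pow_apply]
    nlinarith [sq_nonneg ‖y‖]
  have hle : ‖T x‖ ^ 2 ≤ ‖x‖ ^ 2 := by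
    by_contra! h
    obtain ⟨n, hn⟩ := exists_nat_gt (‖x‖ ^ 2 / (‖T x‖ ^ 2 - ‖x‖ ^ 2))
    rw [div_lt_iff₀ (by linarith)] at hn
    linarith [hbound n]
  exact le_antisymm (le_of_pow_le_pow_left₀ two_ne_zero (norm_nonneg _) hle)
    (hT.norm_le_norm_apply x)

end IsTwoIsometry

end NormedSpace

section InnerProductSpace

variable {𝕜 H : Type*} [RCLike 𝕜] [NormedAddCommGroup H] [InnerProductSpace 𝕜 H]

theorem IsPositive.apply_eq_zero_of_re_inner_self_eq_zero {A : H →L[𝕜] H} (hA : A.IsPositive)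
    {y : H} (hy : RCLike.re ⟪A y, y⟫_𝕜 = 0) : A y = 0 := by
  -- test positivity at `y - t • A y` for a small `t > 0`
  set t : ℝ := (‖A‖ + 1)⁻¹
  have ht : 0 < t := by positivity
  have htA : t * ‖A‖ ≤ 1 := by
    rw [inv_mul_le_one₀ (by positivity)]
    linarith
  have hexpand : RCLike.re ⟪A (y - (t : 𝕜) • A y), y - (t : 𝕜) • A y⟫_𝕜
      = t ^ 2 * RCLike.re ⟪A (A y), A y⟫_𝕜 - 2 * t * ‖A y‖ ^ 2 := by
    simp only [map_sub, map_smul, inner_sub_left, inner_sub_right, inner_smul_left,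
      inner_smul_right, RCLike.conj_ofReal, hA.inner_left_eq_inner_right (A y) y, map_sub,
      RCLike.re_ofReal_mul, hy, inner_self_eq_norm_sq]
    ring
  have hAA : RCLike.re ⟪A (A y), A y⟫_𝕜 ≤ ‖A‖ * ‖A y‖ ^ 2 :=
    calc _ ≤ ‖⟪A (A y), A y⟫_𝕜‖ := RCLike.re_le_norm _
      _ ≤ ‖A (A y)‖ * ‖A y‖ := norm_inner_le_norm _ _
      _ ≤ ‖A‖ * ‖A y‖ * ‖A y‖ := by gcongr; exact A.le_opNorm _
      _ = _ := by ring
  have hpos := hA.re_inner_nonneg_left (y - (t : 𝕜) • A y)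
  rw [hexpand] at hpos
  have htAy : t * ‖A y‖ ^ 2 ≤ 0 := by
    nlinarith [mul_le_mul_of_nonneg_left hAA (sq_nonneg t),
      mul_le_mul_of_nonneg_right htA (mul_nonneg ht.le (sq_nonneg ‖A y‖))]
  have hAy : ‖A y‖ ^ 2 ≤ 0 := nonpos_of_mul_nonpos_right (by linarith) ht
  exact norm_eq_zero.1 (pow_eq_zero_iff two_ne_zero |>.1 (le_antisymm hAy (sq_nonneg _)))

theorem iInf_map_pow_eq_bot {T : H →L[𝕜] H} {N : Submodule 𝕜 H} (hN : N ≤ T.unitaryPartᗮ) :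
    ⨅ n : ℕ, N.map ((T ^ n : H →L[𝕜] H) : H →ₗ[𝕜] H) = ⊥ := by
  refine eq_bot_iff.2 fun x hx => ?_
  have hxN : x ∈ N := by simpa using Submodule.mem_iInf _ |>.1 hx 0
  have hxU : x ∈ T.unitaryPart := Submodule.mem_iInf _ |>.2 fun n => by
    obtain ⟨y, -, hy⟩ := Submodule.mem_iInf _ |>.1 hx n
    exact ⟨y, hy⟩
  exact T.unitaryPart.inf_orthogonal_eq_bot ▸ ⟨hxU, hN hxN⟩

end InnerProductSpace

end ContinuousLinearMap

theorem exists_ge_nat_mul_le_of_summable {b : ℕ → ℝ} (hs : Summable b) (m : ℕ) {ε : ℝ}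
    (hε : 0 < ε) : ∃ n ≥ m, n * b n ≤ ε := by
  by_contra! h
  -- otherwise `b n > ε / n` on a tail, and `b` would dominate the harmonic series
  refine Real.not_summable_one_div_natCast ((summable_nat_add_iff (m + 1)).1 ?_)
  refine Summable.of_nonneg_of_le (fun n => by positivity) (fun n => ?_)
    (((summable_nat_add_iff (m + 1)).2 hs).div_const ε)
  have hn := h (n + (m + 1)) (by omega)
  have hpos : (0 : ℝ) < ↑(n + (m + 1)) := by positivity
  rw [le_div_iff₀ hε, div_mul_eq_mul_div, one_mul, div_le_iff₀ hpos]
  linarith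

namespace Submodule

variable {𝕜 H : Type*} [RCLike 𝕜] [NormedAddCommGroup H] [InnerProductSpace 𝕜 H]

theorem mem_of_forall_exists_inner_eq_norm_sq {K : Submodule 𝕜 H} (hK : IsClosed (K : Set H))
    {x : H} (h : ∀ ε > 0, ∃ z ∈ K, ⟪x, z⟫_𝕜 = (‖x‖ : 𝕜) ^ 2 ∧ ‖z‖ ^ 2 ≤ ‖x‖ ^ 2 + ε) :
    x ∈ K := by
  refine hK.closure_subset (Metric.mem_closure_iff.2 fun δ hδ => ?_)
  obtain ⟨z, hzK, hxz, hz⟩ := h (δ ^ 2 / 2) (by positivity)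
  refine ⟨z, hzK, ?_⟩
  have hdist : ‖x - z‖ ^ 2 < δ ^ 2 := by
    rw [norm_sub_sq (𝕜 := 𝕜), hxz, ← RCLike.ofReal_pow, RCLike.ofReal_re]
    nlinarith [pow_pos hδ 2]
  rw [dist_eq_norm]
  exact (pow_lt_pow_iff_left₀ (norm_nonneg _) hδ.le two_ne_zero).1 hdist

variable [CompleteSpace H]

def Reduces (K : Submodule 𝕜 H) (A : H →L[𝕜] H) : Prop :=
  (∀ x ∈ K, A x ∈ K) ∧ ∀ x ∈ K, adjoint A x ∈ K

namespace Reduces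

variable {K L : Submodule 𝕜 H} {A : H →L[𝕜] H}

theorem inf (hK : K.Reduces A) (hL : L.Reduces A) : (K ⊓ L).Reduces A :=
  ⟨fun x hx => ⟨hK.1 x hx.1, hL.1 x hx.2⟩, fun x hx => ⟨hK.2 x hx.1, hL.2 x hx.2⟩⟩

theorem adjoint (hK : K.Reduces A) : K.Reduces (adjoint A) :=
  ⟨hK.2, by simpa only [adjoint_adjoint] using hK.1⟩

theorem orthogonal (hK : K.Reduces A) : Kᗮ.Reduces A :=
  ⟨fun _ hx => orthogonal_mem_invtSubmodule (fun y hy => hK.2 y hy) hx,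
    fun _ hx => orthogonal_mem_invtSubmodule (fun y hy => hK.adjoint.2 y hy) hx⟩

theorem commute_starProjection [K.HasOrthogonalProjection] (hK : K.Reduces A) :
    Commute K.starProjection A := by
  rw [IsIdempotentElem.commute_iff K.isIdempotentElem_starProjection, range_starProjection,
    ker_starProjection]
  exact ⟨fun x hx => hK.1 x hx, fun x hx => hK.orthogonal.1 x hx⟩

theorem of_starProjection {V : Submodule 𝕜 H} [V.HasOrthogonalProjection]
    (h : ∀ x ∈ K, V.starProjection x ∈ K) : K.Reduces V.starProjection :=
  ⟨h, by rwa [(isSelfAdjoint_starProjection V).adjoint_eq]⟩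

theorem inf_orbitClosure_ker_le (hK : IsClosed (K : Set H)) {T : H →L[𝕜] H} (hT : K.Reduces T)
    (hA : K.Reduces A) :
    K ⊓ T.orbitClosure (LinearMap.ker (A : H →ₗ[𝕜] H)) ≤
      T.orbitClosure (LinearMap.ker (A : H →ₗ[𝕜] H) ⊓ K) := by
  have : CompleteSpace K := hK.completeSpace_coe
  rintro x ⟨hxK, hx⟩
  rw [← (starProjection_eq_self_iff).2 hxK]
  refine T.orbitClosure_mono ?_
    (T.map_orbitClosure_le hT.commute_starProjection _ (mem_map_of_mem hx))
  rintro _ ⟨y, hy, rfl⟩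
  refine ⟨?_, K.starProjection_apply_mem y⟩
  simp only [SetLike.mem_coe, LinearMap.mem_ker, coe_coe] at hy ⊢
  rw [← mul_apply_eq_comp, ← hA.commute_starProjection.eq, mul_apply_eq_comp, hy, map_zero]

theorem sup_inf_orthogonal_eq_top {U V : Submodule 𝕜 H} [U.HasOrthogonalProjection]
    [V.HasOrthogonalProjection] (h : U.Reduces V.starProjection) :
    U ⊓ V ⊔ Uᗮ ⊓ V ⊔ Vᗮ ⊓ U ⊔ Uᗮ ⊓ Vᗮ = ⊤ := by
  have hsplit : ∀ M : Submodule 𝕜 H, (∀ x ∈ M, V.starProjection x ∈ M) →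
      M ≤ M ⊓ V ⊔ M ⊓ Vᗮ := fun M hM x hx => by
    rw [← add_sub_cancel (V.starProjection x) x]
    exact add_mem_sup ⟨hM x hx, V.starProjection_apply_mem x⟩
      ⟨sub_mem hx (hM x hx), V.sub_starProjection_mem_orthogonal x⟩
  refine eq_top_iff.2 ?_
  rw [← sup_orthogonal_of_hasOrthogonalProjection (K := U)]
  refine (sup_le_sup (hsplit U h.1) (hsplit Uᗮ h.orthogonal.1)).trans (le_of_eq ?_)
  rw [inf_comm Vᗮ U, sup_sup_sup_comm, ← sup_assoc]

end Reduces

end Submodule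

namespace ContinuousLinearMap

variable {𝕜 H : Type*} [RCLike 𝕜] [NormedAddCommGroup H] [InnerProductSpace 𝕜 H] [CompleteSpace H]

noncomputable def analyticPart (T : H →L[𝕜] H) : Submodule 𝕜 H :=
  T.orbitClosure (LinearMap.ker (adjoint T : H →ₗ[𝕜] H))

theorem ker_adjoint_le_analyticPart (T : H →L[𝕜] H) :
    LinearMap.ker (adjoint T : H →ₗ[𝕜] H) ≤ T.analyticPart := fun e he => by
  have h := T.pow_apply_mem_orbitClosure 0 he
  rwa [pow_zero, one_apply_eq_self] at h

theorem isClosed_analyticPart (T : H →L[𝕜] H) : IsClosed (T.analyticPart : Set H) :=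
  Submodule.isClosed_topologicalClosure _

theorem analyticPart_le_orthogonal_unitaryPart {T : H →L[𝕜] H}
    (hT : ∀ x ∈ T.unitaryPart, adjoint T x ∈ T.unitaryPart) :
    T.analyticPart ≤ T.unitaryPartᗮ := by
  refine orbitClosure_le (Submodule.isClosed_orthogonal _)
    (fun x hx => orthogonal_mem_invtSubmodule (fun u hu => hT u hu) hx) fun e he => ?_
  refine (Submodule.mem_orthogonal _ _).2 fun u hu => ?_
  obtain ⟨w, rfl⟩ := Submodule.mem_iInf _ |>.1 hu 1
  rw [LinearMap.mem_ker, coe_coe] at he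
  simp [← adjoint_inner_right, he]

theorem unitaryPart_reduces_starProjection {T : H →L[𝕜] H} {K : Submodule 𝕜 H}
    [K.HasOrthogonalProjection] (hK : K.Reduces T) : T.unitaryPart.Reduces K.starProjection :=
  .of_starProjection fun _ hx => mem_unitaryPart_of_commute hK.commute_starProjection hx

theorem isPositive_adjoint_comp_self_sub_one {T : H →L[𝕜] H} (hT : ∀ x, ‖x‖ ≤ ‖T x‖) :
    (adjoint T ∘L T - 1).IsPositive := by
  refine ⟨fun x y => ?_, fun x => ?_⟩
  · simp [inner_sub_left, inner_sub_right, adjoint_inner_left, adjoint_inner_right]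
  · simp only [reApplyInnerSelf, sub_apply, comp_apply, one_apply_eq_self, inner_sub_left,
      adjoint_inner_left, inner_self_eq_norm_sq_to_K, map_sub, RCLike.re_ofReal_pow, sub_nonneg]
    exact pow_le_pow_left₀ (norm_nonneg x) (hT x) 2

theorem exists_sub_apply_mem_ker_adjoint {T : H →L[𝕜] H}
    (hT : IsClosed (LinearMap.range (T : H →ₗ[𝕜] H) : Set H)) (v : H) :
    ∃ w, v - T w ∈ LinearMap.ker (adjoint T : H →ₗ[𝕜] H) := by
  have : CompleteSpace (LinearMap.range (T : H →ₗ[𝕜] H)) := hT.completeSpace_coe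
  obtain ⟨w, hw⟩ := (LinearMap.range (T : H →ₗ[𝕜] H)).starProjection_apply_mem v
  refine ⟨w, ?_⟩
  have := (LinearMap.range (T : H →ₗ[𝕜] H)).sub_starProjection_mem_orthogonal v
  rwa [← hw, T.orthogonal_range] at this

theorem norm_apply_le_of_sub_apply_mem_ker_adjoint {T : H →L[𝕜] H} {v w : H}
    (h : v - T w ∈ LinearMap.ker (adjoint T : H →ₗ[𝕜] H)) : ‖T w‖ ≤ ‖v‖ := by
  rw [LinearMap.mem_ker, coe_coe] at h
  have horth : ⟪T w, v - T w⟫_𝕜 = 0 := by rw [← adjoint_inner_right, h, inner_zero_right]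
  have hpyth := norm_add_sq_eq_norm_sq_add_norm_sq_of_inner_eq_zero _ _ horth
  rw [add_sub_cancel] at hpyth
  exact le_of_pow_le_pow_left₀ two_ne_zero (norm_nonneg _) (by nlinarith [sq_nonneg ‖v - T w‖])

theorem sum_norm_sq_sub_norm_sq_le {T : H →L[𝕜] H} {v : ℕ → H}
    (hv : ∀ k, v k - T (v (k + 1)) ∈ LinearMap.ker (adjoint T : H →ₗ[𝕜] H)) (n : ℕ) :
    ∑ k ∈ Finset.range n, (‖T (v (k + 1))‖ ^ 2 - ‖v (k + 1)‖ ^ 2) ≤ ‖v 0‖ ^ 2 - ‖v n‖ ^ 2 := by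
  refine (Finset.sum_le_sum fun k _ => ?_).trans_eq (Finset.sum_range_sub' (‖v ·‖ ^ 2) n)
  have := norm_apply_le_of_sub_apply_mem_ker_adjoint (hv k)
  nlinarith [norm_nonneg (T (v (k + 1)))]

theorem inner_pow_apply_eq_norm_sq {T : H →L[𝕜] H} {v : ℕ → H}
    (hx : v 0 ∈ T.analyticPartᗮ)
    (hv : ∀ k, v k - T (v (k + 1)) ∈ LinearMap.ker (adjoint T : H →ₗ[𝕜] H)) (n : ℕ) :
    ⟪v 0, (T ^ n) (v n)⟫_𝕜 = (‖v 0‖ : 𝕜) ^ 2 := by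
  have horth : ∀ k, ⟪v 0, (T ^ k) (v k - T (v (k + 1)))⟫_𝕜 = 0 := fun k =>
    Submodule.inner_left_of_mem_orthogonal (T.pow_apply_mem_orbitClosure k (hv k)) hx
  have hsum := congrArg (⟪v 0, ·⟫_𝕜) (T.sum_pow_apply_sub_add v n)
  simp only [inner_add_right, inner_sum, horth, Finset.sum_const_zero, zero_add] at hsum
  rw [hsum, inner_self_eq_norm_sq_to_K]

namespace IsTwoIsometry

variable {T : H →L[𝕜] H} (hT : T.IsTwoIsometry)
include hT

theorem adjoint_apply_apply_of_mem_unitaryPart {x : H} (hx : x ∈ T.unitaryPart) :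
    adjoint T (T x) = x := by
  have h := (isPositive_adjoint_comp_self_sub_one hT.norm_le_norm_apply)
    |>.apply_eq_zero_of_re_inner_self_eq_zero (y := x) ?_
  · simpa [sub_eq_zero] using h
  · simp [inner_sub_left, adjoint_inner_left, hT.norm_apply_eq_of_mem_unitaryPart hx]

theorem adjoint_apply_mem_unitaryPart {x : H} (hx : x ∈ T.unitaryPart) :
    adjoint T x ∈ T.unitaryPart ∧ T (adjoint T x) = x := by
  obtain ⟨y, hy, rfl⟩ := hT.exists_mem_unitaryPart_apply_eq hx
  rw [hT.adjoint_apply_apply_of_mem_unitaryPart hy]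
  exact ⟨hy, rfl⟩

theorem unitaryPart_reduces : T.unitaryPart.Reduces T :=
  ⟨fun _ hx => mem_unitaryPart_of_commute (Commute.refl T) hx,
    fun _ hx => (hT.adjoint_apply_mem_unitaryPart hx).1⟩

theorem exists_mem_pow_apply_eq {K : Submodule 𝕜 H} (hK : K.Reduces T)
    (hKU : K ≤ T.unitaryPart) (n : ℕ) {x : H} (hx : x ∈ K) : ∃ y ∈ K, (T ^ n) y = x := by
  induction n generalizing x with
  | zero => exact ⟨x, hx, by simp⟩
  | succ n ih =>
    obtain ⟨y, hy, rfl⟩ := ih hx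
    refine ⟨adjoint T y, hK.2 y hy, ?_⟩
    rw [pow_succ, mul_apply_eq_comp, (hT.adjoint_apply_mem_unitaryPart (hKU hy)).2]

theorem map_eq_of_reduces {K : Submodule 𝕜 H} (hK : K.Reduces T) (hKU : K ≤ T.unitaryPart) :
    K.map (T : H →ₗ[𝕜] H) = K := by
  refine le_antisymm (Submodule.map_le_iff_le_comap.2 fun x hx => hK.1 x hx) fun x hx => ?_
  obtain ⟨y, hy, rfl⟩ := hT.exists_mem_pow_apply_eq hK hKU 1 hx
  exact ⟨y, hy, by simp⟩

theorem mem_unitaryPart_of_mem_orthogonal {x : H} (hx : x ∈ T.analyticPartᗮ) :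
    x ∈ T.unitaryPart := by
  -- Shimorin's sequence: `T (v (k + 1))` is the projection of `v k` onto `range T`
  choose f hf using exists_sub_apply_mem_ker_adjoint (by simpa using hT.isClosed_range_pow 1)
  set v : ℕ → H := fun k => f^[k] x
  have hv : ∀ k, v k - T (v (k + 1)) ∈ LinearMap.ker (adjoint T : H →ₗ[𝕜] H) := fun k => by
    simpa only [v, Function.iterate_succ_apply'] using hf (v k)
  have henergy : ∀ n, ∑ k ∈ Finset.range n, (‖T (v (k + 1))‖ ^ 2 - ‖v (k + 1)‖ ^ 2) ≤
      ‖x‖ ^ 2 - ‖v n‖ ^ 2 :=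
    sum_norm_sq_sub_norm_sq_le hv
  have hsum_nonneg : ∀ n, 0 ≤ ∑ k ∈ Finset.range n, (‖T (v (k + 1))‖ ^ 2 - ‖v (k + 1)‖ ^ 2) :=
    fun n => Finset.sum_nonneg fun k _ => hT.norm_sq_sub_norm_sq_nonneg _
  have hsummable : Summable fun k => ‖T (v k)‖ ^ 2 - ‖v k‖ ^ 2 :=
    (summable_nat_add_iff 1).1 <| summable_of_sum_range_le
      (fun k => hT.norm_sq_sub_norm_sq_nonneg _) fun n =>
        (henergy n).trans (sub_le_self _ (sq_nonneg _))
  refine Submodule.mem_iInf _ |>.2 fun m =>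
    Submodule.mem_of_forall_exists_inner_eq_norm_sq (hT.isClosed_range_pow m) fun ε hε => ?_
  obtain ⟨n, hnm, hn⟩ := exists_ge_nat_mul_le_of_summable hsummable m hε
  refine ⟨(T ^ n) (v n), ⟨(T ^ (n - m)) (v n), ?_⟩, inner_pow_apply_eq_norm_sq hx hv n, ?_⟩
  · rw [coe_coe, ← mul_apply_eq_comp, ← pow_add, Nat.add_sub_cancel' hnm]
  · rw [hT.norm_sq_pow_apply]
    linarith [henergy n, hsum_nonneg n]

theorem orthogonal_unitaryPart : T.unitaryPartᗮ = T.analyticPart := by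
  have : CompleteSpace T.analyticPart := T.isClosed_analyticPart.completeSpace_coe
  refine le_antisymm ?_
    (analyticPart_le_orthogonal_unitaryPart fun _ hx => (hT.adjoint_apply_mem_unitaryPart hx).1)
  rw [← T.analyticPart.orthogonal_orthogonal]
  exact Submodule.orthogonal_le fun x hx => hT.mem_unitaryPart_of_mem_orthogonal hx

theorem isOrtho_unitaryPart_analyticPart : T.unitaryPart ⟂ T.analyticPart :=
  hT.orthogonal_unitaryPart ▸ T.unitaryPart.isOrtho_orthogonal_right

theorem analyticPart_reduces {A : H →L[𝕜] H} (hA : T.unitaryPart.Reduces A) :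
    T.analyticPart.Reduces A :=
  hT.orthogonal_unitaryPart ▸ hA.orthogonal

end IsTwoIsometry

def DoublyCommute (A B : H →L[𝕜] H) : Prop :=
  Commute A B ∧ Commute A (adjoint B)

namespace DoublyCommute

variable {A B : H →L[𝕜] H}

theorem adjoint_left (h : DoublyCommute A B) : Commute (adjoint A) B := by
  simpa only [star_eq_adjoint, adjoint_adjoint] using
    (h.2.star_star : Commute (star A) (star (adjoint B)))

theorem symm (h : DoublyCommute A B) : DoublyCommute B A :=
  ⟨h.1.symm, h.adjoint_left.symm⟩

theorem unitaryPart_reduces (h : DoublyCommute A B) : B.unitaryPart.Reduces A :=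
  ⟨fun _ hx => mem_unitaryPart_of_commute h.1 hx,
    fun _ hx => mem_unitaryPart_of_commute h.adjoint_left hx⟩

theorem ker_adjoint_reduces (h : DoublyCommute A B) :
    (LinearMap.ker (adjoint B : H →ₗ[𝕜] H)).Reduces A := by
  have hA : Commute (adjoint A) (adjoint B) := by
    simpa only [star_eq_adjoint] using h.1.star_star
  refine ⟨fun x hx => ?_, fun x hx => ?_⟩ <;> rw [LinearMap.mem_ker, coe_coe] at hx ⊢
  · rw [← mul_apply_eq_comp, ← h.2.eq, mul_apply_eq_comp, hx, map_zero]
  · rw [← mul_apply_eq_comp, ← hA.eq, mul_apply_eq_comp, hx, map_zero]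

variable {T₁ T₂ : H →L[𝕜] H}

theorem iInf_range_pow_comp_pow_eq (h : DoublyCommute T₁ T₂) (h₂ : T₂.IsTwoIsometry) :
    ⨅ p : ℕ × ℕ, LinearMap.range (((T₁ ^ p.1) ∘L (T₂ ^ p.2) : H →L[𝕜] H) : H →ₗ[𝕜] H) =
      T₁.unitaryPart ⊓ T₂.unitaryPart := by
  apply le_antisymm
  · intro x hx
    have hx := Submodule.mem_iInf _ |>.1 hx
    refine ⟨Submodule.mem_iInf _ |>.2 fun m => ?_, Submodule.mem_iInf _ |>.2 fun n => ?_⟩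
    · obtain ⟨y, hy⟩ := hx (m, 0)
      exact ⟨y, by simpa using hy⟩
    · obtain ⟨y, hy⟩ := hx (0, n)
      exact ⟨y, by simpa using hy⟩
  · refine fun x hx => Submodule.mem_iInf _ |>.2 fun p => ?_
    obtain ⟨y, hy, rfl⟩ := h₂.exists_mem_pow_apply_eq
      (h.symm.unitaryPart_reduces.inf h₂.unitaryPart_reduces) inf_le_right p.2 hx
    obtain ⟨c, rfl⟩ := Submodule.mem_iInf _ |>.1 hy.1 p.1
    refine ⟨c, ?_⟩
    simp only [coe_coe, comp_apply, ← mul_apply_eq_comp, (h.1.pow_pow p.1 p.2).eq]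

theorem topologicalClosure_iSup_map_eq (h : DoublyCommute T₁ T₂) (h₁ : T₁.IsTwoIsometry)
    (h₂ : T₂.IsTwoIsometry) :
    (⨆ p : ℕ × ℕ, (LinearMap.ker (adjoint T₁ : H →ₗ[𝕜] H) ⊓
      LinearMap.ker (adjoint T₂ : H →ₗ[𝕜] H)).map
        (((T₁ ^ p.1) ∘L (T₂ ^ p.2) : H →L[𝕜] H) : H →ₗ[𝕜] H)).topologicalClosure =
      T₁.analyticPart ⊓ T₂.analyticPart := by
  have hW₁₁ := h₁.analyticPart_reduces h₁.unitaryPart_reduces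
  have hW₁₂ := h₁.analyticPart_reduces h.symm.unitaryPart_reduces
  have hW₂₁ := h₂.analyticPart_reduces h.unitaryPart_reduces
  have hW₂₂ := h₂.analyticPart_reduces h₂.unitaryPart_reduces
  have hE₂ := h.ker_adjoint_reduces
  have hclosed := T₁.isClosed_analyticPart.inter T₂.isClosed_analyticPart
  rw [← orbitClosure_orbitClosure h.1]
  refine le_antisymm (orbitClosure_le hclosed (hW₁₂.inf hW₂₂).1 (orbitClosure_le hclosed
    (hW₁₁.inf hW₂₁).1 (inf_le_inf T₁.ker_adjoint_le_analyticPart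
      T₂.ker_adjoint_le_analyticPart))) ?_
  calc T₁.analyticPart ⊓ T₂.analyticPart
      ≤ T₂.orbitClosure (LinearMap.ker (adjoint T₂ : H →ₗ[𝕜] H) ⊓ T₁.analyticPart) :=
        hW₁₂.inf_orbitClosure_ker_le T₁.isClosed_analyticPart hW₁₂.adjoint
    _ ≤ _ := T₂.orbitClosure_mono <| hE₂.inf_orbitClosure_ker_le (isClosed_ker _) hE₂.adjoint

end DoublyCommute

end ContinuousLinearMap

open Submodule in
/-- **Wold-type decomposition for doubly commuting 2-isometries.**
With `H₀₀ = ⋂_{m,n} T₁^m T₂ⁿ(H)`,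
`H₁₀ = (span closure of ⋃ₘ T₁^m(ker T₁*)) ∩ ⋂ₙ T₂ⁿ(H)`,
`H₀₁ = (span closure of ⋃ₙ T₂ⁿ(ker T₂*)) ∩ ⋂ₘ T₁^m(H)`, and
`H₁₁ = span closure of ⋃_{m,n} T₁^m T₂ⁿ(ker T₁* ∩ ker T₂*)`,
these four subspaces are mutually orthogonal, fill out `H`, jointly reduce
`T₁` and `T₂`, and the restrictions are unitary/analytic as indicated. -/
theorem doublyCommuting_twoIsometries_wold_type_decomposition
    {H : Type*} [NormedAddCommGroup H] [InnerProductSpace ℂ H] [CompleteSpace H]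
    (T₁ T₂ : H →L[ℂ] H)
    (h2iso₁ : ∀ h : H, ‖T₁ (T₁ h)‖ ^ 2 - 2 * ‖T₁ h‖ ^ 2 + ‖h‖ ^ 2 = 0)
    (h2iso₂ : ∀ h : H, ‖T₂ (T₂ h)‖ ^ 2 - 2 * ‖T₂ h‖ ^ 2 + ‖h‖ ^ 2 = 0)
    (hcomm : T₁ ∘L T₂ = T₂ ∘L T₁)
    (hdcomm : T₁ ∘L adjoint T₂ = adjoint T₂ ∘L T₁) :
    ∀ H₀₀ H₁₀ H₀₁ H₁₁ : Submodule ℂ H,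
      H₀₀ = (⨅ p : ℕ × ℕ, LinearMap.range (((T₁ ^ p.1) ∘L (T₂ ^ p.2) : H →L[ℂ] H) : H →ₗ[ℂ] H)) →
      H₁₀ = (⨆ m : ℕ, (LinearMap.ker ((adjoint T₁ : H →L[ℂ] H) : H →ₗ[ℂ] H)).map ((T₁ ^ m : H →L[ℂ] H) : H →ₗ[ℂ] H)).topologicalClosure
              ⊓ (⨅ n : ℕ, LinearMap.range ((T₂ ^ n : H →L[ℂ] H) : H →ₗ[ℂ] H)) →
      H₀₁ = (⨆ n : ℕ, (LinearMap.ker ((adjoint T₂ : H →L[ℂ] H) : H →ₗ[ℂ] H)).map ((T₂ ^ n : H →L[ℂ] H) : H →ₗ[ℂ] H)).topologicalClosure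
              ⊓ (⨅ m : ℕ, LinearMap.range ((T₁ ^ m : H →L[ℂ] H) : H →ₗ[ℂ] H)) →
      H₁₁ = (⨆ p : ℕ × ℕ,
              (LinearMap.ker ((adjoint T₁ : H →L[ℂ] H) : H →ₗ[ℂ] H) ⊓ LinearMap.ker ((adjoint T₂ : H →L[ℂ] H) : H →ₗ[ℂ] H)).map
                (((T₁ ^ p.1) ∘L (T₂ ^ p.2) : H →L[ℂ] H) : H →ₗ[ℂ] H)).topologicalClosure →
      -- mutual orthogonality
      (∀ x ∈ H₀₀, ∀ y ∈ H₁₀, ⟪x, y⟫ = 0) ∧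
      (∀ x ∈ H₀₀, ∀ y ∈ H₀₁, ⟪x, y⟫ = 0) ∧
      (∀ x ∈ H₀₀, ∀ y ∈ H₁₁, ⟪x, y⟫ = 0) ∧
      (∀ x ∈ H₁₀, ∀ y ∈ H₀₁, ⟪x, y⟫ = 0) ∧
      (∀ x ∈ H₁₀, ∀ y ∈ H₁₁, ⟪x, y⟫ = 0) ∧
      (∀ x ∈ H₀₁, ∀ y ∈ H₁₁, ⟪x, y⟫ = 0) ∧
      -- the four pieces fill out H
      H₀₀ ⊔ H₁₀ ⊔ H₀₁ ⊔ H₁₁ = ⊤ ∧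
      -- each piece reduces both T₁ and T₂
      (∀ x ∈ H₀₀, T₁ x ∈ H₀₀) ∧ (∀ x ∈ H₀₀, adjoint T₁ x ∈ H₀₀) ∧
      (∀ x ∈ H₀₀, T₂ x ∈ H₀₀) ∧ (∀ x ∈ H₀₀, adjoint T₂ x ∈ H₀₀) ∧
      (∀ x ∈ H₁₀, T₁ x ∈ H₁₀) ∧ (∀ x ∈ H₁₀, adjoint T₁ x ∈ H₁₀) ∧
      (∀ x ∈ H₁₀, T₂ x ∈ H₁₀) ∧ (∀ x ∈ H₁₀, adjoint T₂ x ∈ H₁₀) ∧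
      (∀ x ∈ H₀₁, T₁ x ∈ H₀₁) ∧ (∀ x ∈ H₀₁, adjoint T₁ x ∈ H₀₁) ∧
      (∀ x ∈ H₀₁, T₂ x ∈ H₀₁) ∧ (∀ x ∈ H₀₁, adjoint T₂ x ∈ H₀₁) ∧
      (∀ x ∈ H₁₁, T₁ x ∈ H₁₁) ∧ (∀ x ∈ H₁₁, adjoint T₁ x ∈ H₁₁) ∧
      (∀ x ∈ H₁₁, T₂ x ∈ H₁₁) ∧ (∀ x ∈ H₁₁, adjoint T₂ x ∈ H₁₁) ∧
      -- T₁ and T₂ are unitary on H₀₀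
      (∀ x ∈ H₀₀, ‖T₁ x‖ = ‖x‖) ∧ H₀₀.map (T₁ : H →ₗ[ℂ] H) = H₀₀ ∧
      (∀ x ∈ H₀₀, ‖T₂ x‖ = ‖x‖) ∧ H₀₀.map (T₂ : H →ₗ[ℂ] H) = H₀₀ ∧
      -- on H₁₀: T₂ is unitary, T₁ is an analytic 2-isometry
      (∀ x ∈ H₁₀, ‖T₂ x‖ = ‖x‖) ∧ H₁₀.map (T₂ : H →ₗ[ℂ] H) = H₁₀ ∧
      (⨅ n : ℕ, H₁₀.map ((T₁ ^ n : H →L[ℂ] H) : H →ₗ[ℂ] H)) = ⊥ ∧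
      -- on H₀₁: T₁ is unitary, T₂ is an analytic 2-isometry
      (∀ x ∈ H₀₁, ‖T₁ x‖ = ‖x‖) ∧ H₀₁.map (T₁ : H →ₗ[ℂ] H) = H₀₁ ∧
      (⨅ n : ℕ, H₀₁.map ((T₂ ^ n : H →L[ℂ] H) : H →ₗ[ℂ] H)) = ⊥ ∧
      -- on H₁₁: both T₁ and T₂ are analytic 2-isometries
      (⨅ n : ℕ, H₁₁.map ((T₁ ^ n : H →L[ℂ] H) : H →ₗ[ℂ] H)) = ⊥ ∧
      (⨅ n : ℕ, H₁₁.map ((T₂ ^ n : H →L[ℂ] H) : H →ₗ[ℂ] H)) = ⊥ := by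
  rintro _ _ _ _ rfl rfl rfl rfl
  have h : DoublyCommute T₁ T₂ := ⟨hcomm, hdcomm⟩
  have h₁ : T₁.IsTwoIsometry := h2iso₁
  have h₂ : T₂.IsTwoIsometry := h2iso₂
  rw [h.iInf_range_pow_comp_pow_eq h₂, h.topologicalClosure_iSup_map_eq h₁ h₂]
  have hU₁₁ := h₁.unitaryPart_reduces
  have hU₁₂ := h.symm.unitaryPart_reduces
  have hU₂₁ := h.unitaryPart_reduces
  have hU₂₂ := h₂.unitaryPart_reduces
  have hW₁₁ := h₁.analyticPart_reduces hU₁₁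
  have hW₁₂ := h₁.analyticPart_reduces hU₁₂
  have hW₂₁ := h₂.analyticPart_reduces hU₂₁
  have hW₂₂ := h₂.analyticPart_reduces hU₂₂
  have o₁ := h₁.isOrtho_unitaryPart_analyticPart
  have o₂ := h₂.isOrtho_unitaryPart_analyticPart
  have : CompleteSpace T₁.unitaryPart := h₁.isClosed_unitaryPart.completeSpace_coe
  have : CompleteSpace T₂.unitaryPart := h₂.isClosed_unitaryPart.completeSpace_coe
  have hfull := (unitaryPart_reduces_starProjection hU₂₁).sup_inf_orthogonal_eq_top
  rw [h₁.orthogonal_unitaryPart, h₂.orthogonal_unitaryPart] at hfull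
  have hW₁ := h₁.orthogonal_unitaryPart.ge
  have hW₂ := h₂.orthogonal_unitaryPart.ge
  exact ⟨isOrtho_iff_inner_eq.1 (o₁.mono inf_le_left inf_le_left),
    isOrtho_iff_inner_eq.1 (o₂.mono inf_le_right inf_le_left),
    isOrtho_iff_inner_eq.1 (o₁.mono inf_le_left inf_le_left),
    isOrtho_iff_inner_eq.1 (o₂.mono inf_le_right inf_le_left),
    isOrtho_iff_inner_eq.1 (o₂.mono inf_le_right inf_le_right),
    isOrtho_iff_inner_eq.1 (o₁.mono inf_le_right inf_le_left), hfull,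
    (hU₁₁.inf hU₂₁).1, (hU₁₁.inf hU₂₁).2, (hU₁₂.inf hU₂₂).1, (hU₁₂.inf hU₂₂).2,
    (hW₁₁.inf hU₂₁).1, (hW₁₁.inf hU₂₁).2, (hW₁₂.inf hU₂₂).1, (hW₁₂.inf hU₂₂).2,
    (hW₂₁.inf hU₁₁).1, (hW₂₁.inf hU₁₁).2, (hW₂₂.inf hU₁₂).1, (hW₂₂.inf hU₁₂).2,
    (hW₁₁.inf hW₂₁).1, (hW₁₁.inf hW₂₁).2, (hW₁₂.inf hW₂₂).1, (hW₁₂.inf hW₂₂).2,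
    fun x hx => h₁.norm_apply_eq_of_mem_unitaryPart hx.1,
    h₁.map_eq_of_reduces (hU₁₁.inf hU₂₁) inf_le_left,
    fun x hx => h₂.norm_apply_eq_of_mem_unitaryPart hx.2,
    h₂.map_eq_of_reduces (hU₁₂.inf hU₂₂) inf_le_right,
    fun x hx => h₂.norm_apply_eq_of_mem_unitaryPart hx.2,
    h₂.map_eq_of_reduces (hW₁₂.inf hU₂₂) inf_le_right,
    iInf_map_pow_eq_bot (inf_le_left.trans hW₁),
    fun x hx => h₁.norm_apply_eq_of_mem_unitaryPart hx.2,
    h₁.map_eq_of_reduces (hW₂₁.inf hU₁₁) inf_le_right,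
    iInf_map_pow_eq_bot (inf_le_left.trans hW₂),
    iInf_map_pow_eq_bot (inf_le_left.trans hW₁), iInf_map_pow_eq_bot (inf_le_right.trans hW₂)⟩
end
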